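/- arXiv:2603.21640 — 5 statements merged into one kernel-verified Lean document; each statement's English description precedes it below -/
import Mathlib

section
/- Let (Ω, 𝓕, ℙ) be a probability space, d ≥ 1, x ∈ ℝ^d, and let C : Ω → ℝ^d be a square-integrable random vector satisfying 𝔼[‖C/r − x‖²] ≤ (1 − φ)·‖x‖² + σ_C for constants φ ∈ (0,1], r > 0, σ_C ≥ 0. Let q ∈ (0,1) and let B : Ω → {0,1} be a Bernoulli random variable with ℙ(B = 1) = q, independent of C. Define the privacy-enhanced compressor output C' = (1 − B)·C, i.e., C' equals C with probability 1 − q and equals 0 with probability q. Then 𝔼[‖C'/r − x‖²] ≤ (1 − φ(1 − q))·‖x‖² + (1 − q)·σ_C. -/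
open MeasureTheory ProbabilityTheory

/-! Masking `C` by an independent Bernoulli variable `B` gives, pointwise,
`g ((1 - B) • C) = (1 - B) g(C) + B g(0)`, so by independence the expected loss is the convex
combination `(1 - q) 𝔼[g(C)] + q g(0)`. With `g c = ‖r⁻¹ • c - x‖²` we have `g 0 = ‖x‖²`, and
the assumed bound on `𝔼[g(C)]` yields the claim. -/

lemma eq_indicator_one_of_forall_eq_zero_or_eq_one {Ω : Type*} {B : Ω → ℝ}
    (hB : ∀ ω, B ω = 0 ∨ B ω = 1) :
    B = {ω | B ω = 1}.indicator 1 := by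
  funext ω
  rcases hB ω with h | h <;> simp [h]

section ZeroOneValued

variable {Ω : Type*} [MeasurableSpace Ω] {μ : Measure Ω} {B : Ω → ℝ}

lemma integral_eq_measureReal_of_forall_eq_zero_or_eq_one (hBm : Measurable B)
    (hB : ∀ ω, B ω = 0 ∨ B ω = 1) : ∫ ω, B ω ∂μ = μ.real {ω | B ω = 1} := by
  conv_lhs => rw [eq_indicator_one_of_forall_eq_zero_or_eq_one hB]
  exact integral_indicator_one (hBm (measurableSet_singleton 1))

lemma integrable_of_forall_eq_zero_or_eq_one [IsFiniteMeasure μ] (hBm : Measurable B)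
    (hB : ∀ ω, B ω = 0 ∨ B ω = 1) : Integrable B μ := by
  rw [eq_indicator_one_of_forall_eq_zero_or_eq_one hB]
  exact (integrable_const 1).indicator (hBm (measurableSet_singleton 1))

lemma norm_one_sub_le_one_of_eq_zero_or_eq_one {b : ℝ} (hb : b = 0 ∨ b = 1) : ‖1 - b‖ ≤ 1 := by
  rcases hb with rfl | rfl <;> norm_num

end ZeroOneValued

lemma comp_mask_eq_of_eq_zero_or_eq_one {E : Type*} [AddCommGroup E] [Module ℝ E]
    (g : E → ℝ) (c : E) {b : ℝ} (hb : b = 0 ∨ b = 1) :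
    g ((1 - b) • c) = (1 - b) * g c + b * g 0 := by
  rcases hb with rfl | rfl <;> simp

theorem integral_comp_mask_of_indepFun {Ω E : Type*} [MeasurableSpace Ω] {μ : Measure Ω}
    [IsProbabilityMeasure μ] [AddCommGroup E] [Module ℝ E] [MeasurableSpace E]
    {B : Ω → ℝ} {C : Ω → E} {g : E → ℝ} (hBm : Measurable B) (hB : ∀ ω, B ω = 0 ∨ B ω = 1)
    (hindep : IndepFun B C μ) (hg : Measurable g) (hgC : Integrable (fun ω => g (C ω)) μ) :
    ∫ ω, g ((1 - B ω) • C ω) ∂μ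
      = (1 - ∫ ω, B ω ∂μ) * ∫ ω, g (C ω) ∂μ + (∫ ω, B ω ∂μ) * g 0 := by
  have hBint := integrable_of_forall_eq_zero_or_eq_one (μ := μ) hBm hB
  have hmask_indep : IndepFun (fun ω => 1 - B ω) (fun ω => g (C ω)) μ :=
    hindep.comp (measurable_const.sub measurable_id) hg
  have hmask_int : Integrable (fun ω => (1 - B ω) * g (C ω)) μ :=
    hgC.bdd_mul (measurable_const.sub hBm).aestronglyMeasurable
      (ae_of_all _ fun ω => norm_one_sub_le_one_of_eq_zero_or_eq_one (hB ω))
  calc ∫ ω, g ((1 - B ω) • C ω) ∂μ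
      = ∫ ω, ((1 - B ω) * g (C ω) + B ω * g 0) ∂μ :=
        integral_congr_ae (ae_of_all _ fun ω => comp_mask_eq_of_eq_zero_or_eq_one g _ (hB ω))
    _ = (∫ ω, (1 - B ω) ∂μ) * ∫ ω, g (C ω) ∂μ + (∫ ω, B ω ∂μ) * g 0 := by
        rw [integral_add hmask_int (hBint.mul_const _), integral_mul_const,
          hmask_indep.integral_fun_mul_eq_mul_integral
            (measurable_const.sub hBm).aestronglyMeasurable hgC.aestronglyMeasurable]
    _ = (1 - ∫ ω, B ω ∂μ) * ∫ ω, g (C ω) ∂μ + (∫ ω, B ω ∂μ) * g 0 := by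
        rw [integral_sub (integrable_const 1) hBint, integral_const, probReal_univ, one_smul]

theorem privacy_enhanced_compressor_bound_general {Ω : Type*} [MeasurableSpace Ω]
    (μ : Measure Ω) [IsProbabilityMeasure μ]
    (d : ℕ) (x : EuclideanSpace ℝ (Fin d))
    (C : Ω → EuclideanSpace ℝ (Fin d)) (hC : MemLp C 2 μ)
    (φ r σC q : ℝ)
    (hq0 : 0 < q) (hq1 : q < 1)
    (h : ∫ ω, ‖r⁻¹ • C ω - x‖ ^ 2 ∂μ ≤ (1 - φ) * ‖x‖ ^ 2 + σC)
    (B : Ω → ℝ) (hBmeas : Measurable B) (hB01 : ∀ ω, B ω = 0 ∨ B ω = 1)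
    (hBq : μ {ω | B ω = 1} = ENNReal.ofReal q)
    (hindep : ProbabilityTheory.IndepFun B C μ)
    (C' : Ω → EuclideanSpace ℝ (Fin d)) (hC' : ∀ ω, C' ω = (1 - B ω) • C ω) :
    ∫ ω, ‖r⁻¹ • C' ω - x‖ ^ 2 ∂μ
      ≤ (1 - φ * (1 - q)) * ‖x‖ ^ 2 + (1 - q) * σC := by
  have hBmean : ∫ ω, B ω ∂μ = q := by
    rw [integral_eq_measureReal_of_forall_eq_zero_or_eq_one hBmeas hB01, measureReal_def, hBq,
      ENNReal.toReal_ofReal hq0.le]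
  have hloss_int : Integrable (fun ω => ‖r⁻¹ • C ω - x‖ ^ 2) μ :=
    ((hC.const_smul r⁻¹).sub (memLp_const x)).integrable_norm_pow two_ne_zero
  have hsplit := integral_comp_mask_of_indepFun hBmeas hB01 hindep
    (g := fun c => ‖r⁻¹ • c - x‖ ^ 2) (by fun_prop) hloss_int
  simp only [hBmean, smul_zero, zero_sub, norm_neg] at hsplit
  calc ∫ ω, ‖r⁻¹ • C' ω - x‖ ^ 2 ∂μ
      = (1 - q) * ∫ ω, ‖r⁻¹ • C ω - x‖ ^ 2 ∂μ + q * ‖x‖ ^ 2 := by simpa only [hC'] using hsplit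
    _ ≤ (1 - q) * ((1 - φ) * ‖x‖ ^ 2 + σC) + q * ‖x‖ ^ 2 := by gcongr
    _ = (1 - φ * (1 - q)) * ‖x‖ ^ 2 + (1 - q) * σC := by ring

/-- The privacy-enhanced compressor `C' = (1 − B)·C`, where `B` is a Bernoulli(q) variable
independent of `C`, still satisfies the general compressor assumption, with parameters
`φ' = φ(1 − q)` and `σ_C' = (1 − q)σ_C`. -/
theorem privacy_enhanced_compressor_bound {Ω : Type*} [MeasurableSpace Ω]
    (μ : Measure Ω) [IsProbabilityMeasure μ]
    (d : ℕ) (hd : 1 ≤ d) (x : EuclideanSpace ℝ (Fin d))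
    (C : Ω → EuclideanSpace ℝ (Fin d)) (hC : MemLp C 2 μ)
    (φ r σC q : ℝ) (hφ0 : 0 < φ) (hφ1 : φ ≤ 1) (hr : 0 < r) (hσ : 0 ≤ σC)
    (hq0 : 0 < q) (hq1 : q < 1)
    (h : ∫ ω, ‖r⁻¹ • C ω - x‖ ^ 2 ∂μ ≤ (1 - φ) * ‖x‖ ^ 2 + σC)
    (B : Ω → ℝ) (hBmeas : Measurable B) (hB01 : ∀ ω, B ω = 0 ∨ B ω = 1)
    (hBq : μ {ω | B ω = 1} = ENNReal.ofReal q)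
    (hindep : ProbabilityTheory.IndepFun B C μ)
    (C' : Ω → EuclideanSpace ℝ (Fin d)) (hC' : ∀ ω, C' ω = (1 - B ω) • C ω) :
    ∫ ω, ‖r⁻¹ • C' ω - x‖ ^ 2 ∂μ
      ≤ (1 - φ * (1 - q)) * ‖x‖ ^ 2 + (1 - q) * σC :=
  privacy_enhanced_compressor_bound_general μ d x C hC φ r σC q hq0 hq1 h B hBmeas hB01 hBq hindep
    C' hC'
end

section
/- Let {z_k}, {r_{1,k}}, {r_{2,k}} be real sequences indexed by k ∈ ℕ, let t₁ be a positive natural number, and let a₁ > 0, a₂ > 0 be constants. Suppose for all k ∈ ℕ: z_k ≥ 0, z_{k+1} ≤ (1 − r_{1,k})·z_k + r_{2,k}, 1 > r_{1,k} ≥ a₁/(k + t₁), and r_{2,k} ≤ a₂/(k + t₁)². Then for all k ≥ 1, z_k ≤ t₁^{a₁}·z₀/(k + t₁)^{a₁} + a₂/(k + t₁ − 1)² + 4·a₂·s₁(k + t₁), where s₁(m) = 1/((a₁ − 1)·m) if a₁ > 1, s₁(m) = ln(m − 1)/m if a₁ = 1, and s₁(m) = −t₁^{a₁−1}/((a₁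 − 1)·m^{a₁}) if a₁ < 1. -/
lemma aux_bern_nonpos {s p : ℝ} (hs : -1 < s) (hp : p ≤ 0) : 1 + p * s ≤ (1+s)^p := by
  have h1 : (0:ℝ) < 1 + s := by linarith
  have hlog : Real.log (1+s) ≤ s := by
    have := Real.log_le_sub_one_of_pos h1; linarith
  calc 1 + p*s = p*s + 1 := by ring
    _ ≤ Real.exp (p*s) := Real.add_one_le_exp _
    _ ≤ Real.exp (p * Real.log (1+s)) := by
        exact Real.exp_le_exp.2 (mul_le_mul_of_nonpos_left hlog hp)
    _ = (1+s)^p := by rw [Real.rpow_def_of_pos h1]; ring_nf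

lemma xpow_sub_one {b x : ℝ} (hx : 0 < x) : x^(b-1) = x^b / x := by
  rw [Real.rpow_sub hx, Real.rpow_one]

lemma tele_ge_one {b x : ℝ} (hb : 1 ≤ b) (hx : 0 < x) :
    b * x^(b-1) ≤ (x+1)^b - x^b := by
  have hxb : (0:ℝ) < x^b := Real.rpow_pos_of_pos hx b
  have hs : (-1:ℝ) ≤ 1/x := le_trans (by norm_num : (-1:ℝ) ≤ 0) (by positivity)
  have hB := one_add_mul_self_le_rpow_one_add hs hb
  have h1 : (1:ℝ)+1/x = (x+1)/x := by field_simp; try ring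
  have h2 : ((x+1)/x)^b = (x+1)^b / x^b := Real.div_rpow (by linarith) hx.le b
  have h := mul_le_mul_of_nonneg_right hB hxb.le
  rw [h1, h2, div_mul_cancel₀ _ hxb.ne'] at h
  have h3 : (1 + b*(1/x)) * x^b = x^b + b * x^(b-1) := by
    rw [xpow_sub_one hx]; field_simp
  rw [h3] at h; linarith

lemma tele_pos {b x : ℝ} (hb0 : 0 ≤ b) (hb1 : b ≤ 1) (hx : 1 ≤ x) :
    b * x^(b-1) ≤ x^b - (x-1)^b := by
  have hx0 : (0:ℝ) < x := by linarith
  have hxb : (0:ℝ) < x^b := Real.rpow_pos_of_pos hx0 b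
  have hs : (-1:ℝ) ≤ -(1/x) := by
    have : 1/x ≤ 1 := by rw [div_le_one hx0]; linarith
    linarith
  have hB := rpow_one_add_le_one_add_mul_self hs hb0 hb1
  have h1 : (1:ℝ)+(-(1/x)) = (x-1)/x := by field_simp; try ring
  have h2 : ((x-1)/x)^b = (x-1)^b / x^b := Real.div_rpow (by linarith) hx0.le b
  have h := mul_le_mul_of_nonneg_right hB hxb.le
  rw [h1, h2, div_mul_cancel₀ _ hxb.ne'] at h
  have h3 : (1 + b*(-(1/x))) * x^b = x^b - b * x^(b-1) := by
    rw [xpow_sub_one hx0]; field_simp; ring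
  rw [h3] at h; linarith

lemma tele_neg {b x : ℝ} (hb : b ≤ 0) (hx : 1 < x) :
    (-b) * x^(b-1) ≤ (x-1)^b - x^b := by
  have hx0 : (0:ℝ) < x := by linarith
  have hxb : (0:ℝ) < x^b := Real.rpow_pos_of_pos hx0 b
  have hs : (-1:ℝ) < -(1/x) := by
    have : 1/x < 1 := by rw [div_lt_one hx0]; linarith
    linarith
  have hB := aux_bern_nonpos hs hb
  have h1 : (1:ℝ)+(-(1/x)) = (x-1)/x := by field_simp; try ring
  have h2 : ((x-1)/x)^b = (x-1)^b / x^b := Real.div_rpow (by linarith) hx0.le b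
  have h := mul_le_mul_of_nonneg_right hB hxb.le
  rw [h1, h2, div_mul_cancel₀ _ hxb.ne'] at h
  have h3 : (1 + b*(-(1/x))) * x^b = x^b - b * x^(b-1) := by
    rw [xpow_sub_one hx0]; field_simp; ring
  rw [h3] at h; linarith

lemma tele_log {x : ℝ} (hx : 1 < x) : 1/x ≤ Real.log x - Real.log (x-1) := by
  have h0 : (0:ℝ) < x - 1 := by linarith
  have hx0 : (0:ℝ) < x := by linarith
  have h2 : Real.log ((x-1)/x) ≤ (x-1)/x - 1 := Real.log_le_sub_one_of_pos (div_pos h0 hx0)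
  rw [Real.log_div h0.ne' hx0.ne'] at h2
  have h3 : (x-1)/x - 1 = -(1/x) := by field_simp; try ring
  linarith [h3 ▸ h2]

lemma aux_key {a x : ℝ} (hx : 0 < x) (ha : 0 ≤ a) : 1 - a/x ≤ (x/(x+1))^a := by
  have hx1 : (0:ℝ) < x + 1 := by linarith
  have hq : (0:ℝ) < x/(x+1) := div_pos hx hx1
  have hlog : -(1/x) ≤ Real.log (x/(x+1)) := by
    have h2 : Real.log ((x+1)/x) ≤ (x+1)/x - 1 := Real.log_le_sub_one_of_pos (div_pos hx1 hx)
    have h3 : (x+1)/x - 1 = 1/x := by field_simp; try ring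
    have h4 : Real.log (x/(x+1)) = - Real.log ((x+1)/x) := by
      rw [← Real.log_inv]; congr 1; field_simp; try ring
    rw [h4]; linarith
  calc 1 - a/x = -(a/x) + 1 := by ring
    _ ≤ Real.exp (-(a/x)) := Real.add_one_le_exp _
    _ ≤ Real.exp (a * Real.log (x/(x+1))) := by
        apply Real.exp_le_exp.2
        have he : -(a / x) = a * (-(1/x)) := by ring
        rw [he]
        exact mul_le_mul_of_nonneg_left hlog ha
    _ = (x/(x+1))^a := by rw [Real.rpow_def_of_pos hq]; ring_nf



lemma sum1' {b T : ℝ} (hb : 1 ≤ b) (hT : 1 ≤ T) :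
    ∀ n : ℕ, b * ∑ i ∈ Finset.range n, ((i:ℝ)+1+T)^(b-1) ≤ ((n:ℝ)+1+T)^b - (1+T)^b := by
  intro n; induction n with
  | zero => simp
  | succ n ih =>
    have hx : (0:ℝ) < (n:ℝ)+1+T := by
      have : (0:ℝ) ≤ (n:ℝ) := Nat.cast_nonneg n; linarith
    have ht := tele_ge_one hb hx
    rw [Finset.sum_range_succ, mul_add]
    push_cast
    have e : ((n:ℝ)+1)+1+T = ((n:ℝ)+1+T)+1 := by ring
    rw [e]; linarith

lemma sum2' {b T : ℝ} (hb0 : 0 ≤ b) (hb1 : b ≤ 1) (hT : 1 ≤ T) :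
    ∀ n : ℕ, b * ∑ i ∈ Finset.range n, ((i:ℝ)+1+T)^(b-1) ≤ ((n:ℝ)+T)^b - T^b := by
  intro n; induction n with
  | zero => simp
  | succ n ih =>
    have hx : (1:ℝ) ≤ (n:ℝ)+1+T := by
      have : (0:ℝ) ≤ (n:ℝ) := Nat.cast_nonneg n; linarith
    have ht := tele_pos hb0 hb1 hx
    rw [Finset.sum_range_succ, mul_add]
    push_cast
    have e : ((n:ℝ)+1+T) - 1 = (n:ℝ)+T := by ring
    rw [e] at ht
    have e2 : ((n:ℝ)+1)+T = ((n:ℝ)+1+T) := by ring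
    rw [e2]; linarith

lemma sum3' {b T : ℝ} (hb : b ≤ 0) (hT : 1 ≤ T) :
    ∀ n : ℕ, (-b) * ∑ i ∈ Finset.range n, ((i:ℝ)+1+T)^(b-1) ≤ T^b - ((n:ℝ)+T)^b := by
  intro n; induction n with
  | zero => simp
  | succ n ih =>
    have hx : (1:ℝ) < (n:ℝ)+1+T := by
      have : (0:ℝ) ≤ (n:ℝ) := Nat.cast_nonneg n; linarith
    have ht := tele_neg hb hx
    rw [Finset.sum_range_succ, mul_add]
    push_cast
    have e : ((n:ℝ)+1+T) - 1 = (n:ℝ)+T := by ring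
    rw [e] at ht
    have e2 : ((n:ℝ)+1)+T = ((n:ℝ)+1+T) := by ring
    rw [e2]; linarith

lemma sum4' {T : ℝ} (hT : 1 ≤ T) :
    ∀ n : ℕ, ∑ i ∈ Finset.range n, ((i:ℝ)+1+T)^(-1:ℝ) ≤ Real.log ((n:ℝ)+T) - Real.log T := by
  intro n; induction n with
  | zero => simp
  | succ n ih =>
    have hx : (1:ℝ) < (n:ℝ)+1+T := by
      have : (0:ℝ) ≤ (n:ℝ) := Nat.cast_nonneg n; linarith
    have ht := tele_log hx
    rw [Finset.sum_range_succ]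
    have e : ((n:ℝ)+1+T) - 1 = (n:ℝ)+T := by ring
    rw [e] at ht
    have e3 : ((n:ℝ)+1+T)^(-1:ℝ) = 1/((n:ℝ)+1+T) := by
      rw [Real.rpow_neg_one]; rw [one_div]
    push_cast
    have e2 : ((n:ℝ)+1)+T = ((n:ℝ)+1+T) := by ring
    rw [e2, e3]; linarith

lemma lemA' {T : ℝ} (z r1 r2 : ℕ → ℝ) (a1 a2 : ℝ) (hT : 1 ≤ T) (ha1 : 0 < a1)
    (hz : ∀ k, 0 ≤ z k)
    (hrec : ∀ k, z (k+1) ≤ (1 - r1 k) * z k + r2 k)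
    (hr1l : ∀ k : ℕ, a1 / ((k:ℝ)+T) ≤ r1 k)
    (hr2 : ∀ k : ℕ, r2 k ≤ a2 / ((k:ℝ)+T)^2) :
    ∀ k : ℕ, ((k:ℝ)+T)^a1 * z k ≤
      T^a1 * z 0 + a2 * ∑ i ∈ Finset.range k, ((i:ℝ)+1+T)^a1 / ((i:ℝ)+T)^2 := by
  intro k; induction k with
  | zero => simp
  | succ k ih =>
    set m : ℝ := (k:ℝ) + T with hm
    have hm0 : 0 < m := by
      have : (0:ℝ) ≤ (k:ℝ) := Nat.cast_nonneg k
      rw [hm]; linarith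
    have hm1 : (0:ℝ) < m + 1 := by linarith
    have hP : 0 < (m+1)^a1 := Real.rpow_pos_of_pos hm1 a1
    have step1 : (1 - r1 k) * z k ≤ (m/(m+1))^a1 * z k := by
      apply mul_le_mul_of_nonneg_right _ (hz k)
      calc 1 - r1 k ≤ 1 - a1/m := by have := hr1l k; linarith
        _ ≤ (m/(m+1))^a1 := aux_key hm0 ha1.le
    have step2 : (m+1)^a1 * ((m/(m+1))^a1 * z k) = m^a1 * z k := by
      rw [Real.div_rpow hm0.le hm1.le a1, ← mul_assoc, mul_comm ((m+1)^a1),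
        div_mul_cancel₀ _ hP.ne']
    have hcast : ((k+1:ℕ):ℝ) + T = m + 1 := by push_cast [hm]; ring
    rw [hcast]
    calc (m+1)^a1 * z (k+1) ≤ (m+1)^a1 * ((1 - r1 k) * z k + r2 k) :=
          mul_le_mul_of_nonneg_left (hrec k) hP.le
      _ ≤ (m+1)^a1 * ((m/(m+1))^a1 * z k + a2/m^2) := by
          apply mul_le_mul_of_nonneg_left _ hP.le
          have h2 := hr2 k
          linarith [step1]
      _ = m^a1 * z k + a2 * ((m+1)^a1/m^2) := by rw [mul_add, step2]; ring
      _ ≤ (T^a1 * z 0 + a2 * ∑ i ∈ Finset.range k, ((i:ℝ)+1+T)^a1 / ((i:ℝ)+T)^2)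
            + a2 * ((m+1)^a1/m^2) := by linarith [ih]
      _ = T^a1 * z 0 + a2 * ∑ i ∈ Finset.range (k+1), ((i:ℝ)+1+T)^a1/((i:ℝ)+T)^2 := by
          rw [Finset.sum_range_succ, mul_add]
          have e1 : (k:ℝ)+1+T = m+1 := by rw [hm]; ring
          rw [e1, hm]; ring


/-- Convergence rate lemma for sequences satisfying
`z_{k+1} ≤ (1 − r_{1,k}) z_k + r_{2,k}` with `r_{1,k} ≥ a₁/(k+t₁)` and
`r_{2,k} ≤ a₂/(k+t₁)²` (case `δ = 1` of Lemma 4 in the paper). -/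
theorem sequence_rate_lemma_delta_one (z r1 r2 : ℕ → ℝ) (t1 : ℕ) (ht1 : 1 ≤ t1)
    (a1 a2 : ℝ) (ha1 : 0 < a1) (ha2 : 0 < a2)
    (hz : ∀ k, 0 ≤ z k)
    (hrec : ∀ k, z (k + 1) ≤ (1 - r1 k) * z k + r2 k)
    (hr1u : ∀ k, r1 k < 1)
    (hr1l : ∀ k : ℕ, a1 / ((k : ℝ) + (t1 : ℝ)) ≤ r1 k)
    (hr2 : ∀ k : ℕ, r2 k ≤ a2 / ((k : ℝ) + (t1 : ℝ)) ^ 2)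
    (s1 : ℝ → ℝ)
    (hs1 : ∀ m : ℝ, s1 m =
      if 1 < a1 then 1 / ((a1 - 1) * m)
      else if a1 = 1 then Real.log (m - 1) / m
      else -((t1 : ℝ) ^ (a1 - 1)) / ((a1 - 1) * m ^ a1)) :
    ∀ k : ℕ, 1 ≤ k →
      z k ≤ (t1 : ℝ) ^ a1 * z 0 / ((k : ℝ) + (t1 : ℝ)) ^ a1
        + a2 / ((k : ℝ) + (t1 : ℝ) - 1) ^ 2
        + 4 * a2 * s1 ((k : ℝ) + (t1 : ℝ)) := by
  intro k hk
  obtain ⟨n, rfl⟩ : ∃ n, k = n + 1 := ⟨k - 1, (Nat.succ_pred_eq_of_pos hk).symm⟩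
  set T : ℝ := (t1 : ℝ) with hTdef
  have hT : (1:ℝ) ≤ T := by rw [hTdef]; exact_mod_cast ht1
  have hn0 : (0:ℝ) ≤ (n:ℝ) := Nat.cast_nonneg n
  set M : ℝ := (n:ℝ) + 1 + T with hMdef
  have hM1 : (1:ℝ) < M := by rw [hMdef]; linarith
  have hM0 : (0:ℝ) < M := by linarith
  have hP : (0:ℝ) < M ^ a1 := Real.rpow_pos_of_pos hM0 a1
  have hMk : ((n+1:ℕ):ℝ) + T = M := by rw [hMdef]; push_cast; ring
  rw [hMk]
  have hM1' : M - 1 = (n:ℝ) + T := by rw [hMdef]; ring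
  rw [hM1']
  -- unrolled bound
  have hA := lemA' z r1 r2 a1 a2 hT ha1 hz hrec hr1l hr2 (n+1)
  rw [Finset.sum_range_succ, hMk] at hA
  -- pointwise bound on sum terms
  set Sb : ℝ := ∑ i ∈ Finset.range n, ((i:ℝ)+1+T)^(a1-2) with hSbdef
  have hsum : ∑ i ∈ Finset.range n, ((i:ℝ)+1+T)^a1 / ((i:ℝ)+T)^2 ≤ 4 * Sb := by
    rw [hSbdef, Finset.mul_sum]
    apply Finset.sum_le_sum
    intro i _
    have hi0 : (0:ℝ) ≤ (i:ℝ) := Nat.cast_nonneg i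
    have hx : (1:ℝ) ≤ (i:ℝ) + T := by linarith
    have hy : (0:ℝ) < (i:ℝ)+1+T := by linarith
    have hsplit : ((i:ℝ)+1+T)^a1 = ((i:ℝ)+1+T)^(a1-2) * ((i:ℝ)+1+T)^2 := by
      rw [← Real.rpow_natCast ((i:ℝ)+1+T) 2, ← Real.rpow_add hy]
      norm_num
    rw [hsplit]
    have hsq : ((i:ℝ)+1+T)^2 / ((i:ℝ)+T)^2 ≤ 4 := by
      rw [div_le_iff₀ (by positivity)]
      nlinarith
    calc ((i:ℝ)+1+T)^(a1-2) * ((i:ℝ)+1+T)^2 / ((i:ℝ)+T)^2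
        = ((i:ℝ)+1+T)^(a1-2) * (((i:ℝ)+1+T)^2 / ((i:ℝ)+T)^2) := by ring
      _ ≤ ((i:ℝ)+1+T)^(a1-2) * 4 :=
          mul_le_mul_of_nonneg_left hsq (Real.rpow_nonneg hy.le _)
      _ = 4 * ((i:ℝ)+1+T)^(a1-2) := by ring
  -- the key per-case bound
  have hSb : Sb ≤ M^a1 * s1 M := by
    rcases lt_trichotomy 1 a1 with h1 | h1 | h1
    · -- 1 < a1
      rw [hs1 M, if_pos h1]
      have hb : (0:ℝ) < a1 - 1 := by linarith
      rw [mul_one_div, le_div_iff₀ (mul_pos hb hM0)]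
      have hmul : M^(a1-1) * M = M^a1 := by
        rw [xpow_sub_one hM0, div_mul_cancel₀ _ hM0.ne']
      have hkey2 : (a1-1) * Sb ≤ M^(a1-1) := by
        rcases le_or_gt 2 a1 with h2 | h2
        · have hs := sum1' (b := a1-1) (by linarith) hT n
          rw [show a1-1-1 = a1-2 by ring] at hs
          have hpos : (0:ℝ) ≤ (1+T)^(a1-1) := Real.rpow_nonneg (by linarith) _
          rw [← hSbdef, ← hMdef] at hs
          linarith
        · have hs := sum2' (b := a1-1) (by linarith) (by linarith) hT n
          rw [show a1-1-1 = a1-2 by ring] at hs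
          rw [← hSbdef] at hs
          have hpos : (0:ℝ) ≤ T^(a1-1) := Real.rpow_nonneg (by linarith) _
          have hmono : ((n:ℝ)+T)^(a1-1) ≤ M^(a1-1) :=
            Real.rpow_le_rpow (by linarith) (by rw [hMdef]; linarith) (by linarith)
          linarith
      calc Sb * ((a1-1)*M) = (a1-1)*Sb*M := by ring
        _ ≤ M^(a1-1)*M := mul_le_mul_of_nonneg_right hkey2 hM0.le
        _ = M^a1 := hmul
    · -- a1 = 1
      subst h1
      rw [hs1 M, if_neg (lt_irrefl 1), if_pos rfl, Real.rpow_one]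
      have hMne : M ≠ 0 := hM0.ne'
      have hR : M * (Real.log (M-1)/M) = Real.log (M-1) := by field_simp
      rw [hR, hM1']
      have hs := sum4' hT n
      have hlogT : 0 ≤ Real.log T := Real.log_nonneg hT
      have he : Sb = ∑ i ∈ Finset.range n, ((i:ℝ)+1+T)^(-1:ℝ) := by
        rw [hSbdef]; norm_num
      rw [he]; linarith
    · -- a1 < 1
      rw [hs1 M, if_neg (by linarith), if_neg (by linarith)]
      have hb : a1 - 1 < 0 := by linarith
      have hMane : M^a1 ≠ 0 := hP.ne'
      have h4 : (a1-1) * M^a1 ≠ 0 := mul_ne_zero (by linarith) hMane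
      have hR : M^a1 * (-(T^(a1-1)) / ((a1-1) * M^a1)) = T^(a1-1)/(1-a1) := by
        rw [mul_comm, div_mul_eq_mul_div,
          div_eq_div_iff h4 (ne_of_gt (by linarith : (0:ℝ) < 1 - a1))]
        ring
      rw [hR, le_div_iff₀ (by linarith : (0:ℝ) < 1 - a1)]
      have hs := sum3' (b := a1-1) hb.le hT n
      rw [show a1-1-1 = a1-2 by ring, ← hSbdef] at hs
      have hpos : (0:ℝ) ≤ ((n:ℝ)+T)^(a1-1) := Real.rpow_nonneg (by linarith) _
      nlinarith
  -- assemble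
  refine le_of_mul_le_mul_left ?_ hP
  have e1 : M^a1 * (T^a1 * z 0 / M^a1) = T^a1 * z 0 := by
    rw [mul_comm, div_mul_cancel₀ _ hP.ne']
  have eR : M^a1 * (T^a1 * z 0 / M^a1 + a2/((n:ℝ)+T)^2 + 4*a2*(s1 M))
      = T^a1 * z 0 + a2 * (M^a1/((n:ℝ)+T)^2) + 4*a2*(M^a1 * s1 M) := by
    rw [mul_add, mul_add, e1]
    ring
  rw [eR]
  have h2 : a2 * (∑ i ∈ Finset.range n, ((i:ℝ)+1+T)^a1 / ((i:ℝ)+T)^2) ≤ a2 * (4*Sb) :=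
    mul_le_mul_of_nonneg_left hsum ha2.le
  have h3 : a2 * (4*Sb) ≤ 4*a2*(M^a1 * s1 M) := by nlinarith
  linarith
end

section
/- Let {z_k}, {r_{1,k}}, {r_{2,k}} be real sequences indexed by k ∈ ℕ, let t₁ be a positive natural number, and let a₁ ∈ (0,1), a₂ > 0 be constants. Suppose for all k ∈ ℕ: z_k ≥ 0, z_{k+1} ≤ (1 − r_{1,k})·z_k + r_{2,k}, 1 > r_{1,k} ≥ a₁, and r_{2,k} ≤ a₂/(k + t₁)². Then there exists a constant M ≥ 0, depending only on a₁, a₂ and t₁, such that for all k ∈ ℕ, z_k ≤ (1 − a₁)^k·z₀ + M/(k + t₁)². In particular, z_k = O(1/k²). -/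
/-- Case `δ = 0` of the sequence lemma: if `z_{k+1} ≤ (1 − r_{1,k}) z_k + r_{2,k}` with
`1 > r_{1,k} ≥ a₁ ∈ (0,1)` and `r_{2,k} ≤ a₂/(k+t₁)²`, then there is a constant `M ≥ 0`
depending only on `a₁, a₂, t₁` such that `z_k ≤ (1 − a₁)^k z₀ + M/(k+t₁)²` for all `k`;
in particular `z_k = O(1/k²)`. -/
theorem sequence_rate_lemma_delta_zero (t1 : ℕ) (ht1 : 1 ≤ t1)
    (a1 a2 : ℝ) (ha10 : 0 < a1) (ha11 : a1 < 1) (ha2 : 0 < a2) :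
    ∃ M : ℝ, 0 ≤ M ∧ ∀ z r1 r2 : ℕ → ℝ,
      (∀ k, 0 ≤ z k) →
      (∀ k, z (k + 1) ≤ (1 - r1 k) * z k + r2 k) →
      (∀ k, r1 k < 1) →
      (∀ k, a1 ≤ r1 k) →
      (∀ k : ℕ, r2 k ≤ a2 / ((k : ℝ) + (t1 : ℝ)) ^ 2) →
      ∀ k : ℕ, z k ≤ (1 - a1) ^ k * z 0 + M / ((k : ℝ) + (t1 : ℝ)) ^ 2 := by
  obtain ⟨q, hqdef⟩ : ∃ q : ℝ, q = 1 - a1 := ⟨_, rfl⟩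
  have hq0 : 0 ≤ q := by rw [hqdef]; linarith
  have hq1 : q < 1 := by rw [hqdef]; linarith
  obtain ⟨s, hsdef⟩ : ∃ s : ℝ, s = Real.sqrt q := ⟨_, rfl⟩
  have hs0 : 0 ≤ Real.sqrt q := Real.sqrt_nonneg q
  rw [← hsdef] at hs0
  have hss : s * s = q := by rw [hsdef]; exact Real.mul_self_sqrt hq0
  have hs1 : s < 1 := by
    nlinarith [hss]
  -- boundedness of (i+1)^2 * s^i
  have htend : Filter.Tendsto (fun n : ℕ => ((n : ℝ) + 1) ^ 2 * s ^ n)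
      Filter.atTop (nhds 0) := by
    have hnorm : ‖s‖ < 1 := by rw [Real.norm_eq_abs, abs_of_nonneg hs0]; exact hs1
    have h1 : Filter.Tendsto (fun n : ℕ => (n : ℝ) ^ 2 * s ^ n)
        Filter.atTop (nhds 0) :=
      (summable_pow_mul_geometric_of_norm_lt_one 2 hnorm).tendsto_atTop_zero
    have h2 : Filter.Tendsto (fun n : ℕ => (n : ℝ) * s ^ n)
        Filter.atTop (nhds 0) := by
      have := (summable_pow_mul_geometric_of_norm_lt_one 1 hnorm).tendsto_atTop_zero
      simpa using this
    have h3 : Filter.Tendsto (fun n : ℕ => s ^ n) Filter.atTop (nhds 0) :=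
      tendsto_pow_atTop_nhds_zero_of_lt_one hs0 hs1
    have := (h1.add ((h2.const_mul 2).add h3))
    simp only [add_zero, mul_zero] at this
    convert this using 2 with n
    ring
  obtain ⟨E, hE⟩ := htend.bddAbove_range
  have hEb : ∀ n : ℕ, ((n : ℝ) + 1) ^ 2 * s ^ n ≤ E := by
    intro n; exact hE ⟨n, rfl⟩
  have hE0 : 0 ≤ E := le_trans (by norm_num) (hEb 0)
  have hs1' : 0 < 1 - s := by linarith
  refine ⟨4 * E * a2 * (1 - s)⁻¹, by positivity, ?_⟩
  intro z r1 r2 hz hrec hr1lt hr1ge hr2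
  -- main induction with explicit sum
  have key : ∀ k : ℕ, z k ≤ q ^ k * z 0 +
      ∑ j ∈ Finset.range k, q ^ (k - 1 - j) * (a2 / ((j : ℝ) + (t1 : ℝ)) ^ 2) := by
    intro k
    induction k with
    | zero => simp
    | succ k ih =>
      have h1 : z (k + 1) ≤ q * z k + a2 / ((k : ℝ) + (t1 : ℝ)) ^ 2 := by
        have := hrec k
        have h2 := hr2 k
        have hzk := hz k
        have : z (k+1) ≤ (1 - r1 k) * z k + a2 / ((k : ℝ) + (t1 : ℝ)) ^ 2 := by linarith
        have hmul : (1 - r1 k) * z k ≤ q * z k := by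
          apply mul_le_mul_of_nonneg_right _ hzk
          rw [hqdef]; linarith [hr1ge k]
        linarith
      have h2 : q * z k ≤ q * (q ^ k * z 0 +
          ∑ j ∈ Finset.range k, q ^ (k - 1 - j) * (a2 / ((j : ℝ) + (t1 : ℝ)) ^ 2)) :=
        mul_le_mul_of_nonneg_left ih hq0
      have hsum : q * (q ^ k * z 0 +
          ∑ j ∈ Finset.range k, q ^ (k - 1 - j) * (a2 / ((j : ℝ) + (t1 : ℝ)) ^ 2))
          + a2 / ((k : ℝ) + (t1 : ℝ)) ^ 2
          = q ^ (k+1) * z 0 +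
          ∑ j ∈ Finset.range (k+1), q ^ (k + 1 - 1 - j) * (a2 / ((j : ℝ) + (t1 : ℝ)) ^ 2) := by
        rw [Finset.sum_range_succ, mul_add, Finset.mul_sum]
        have hterm : ∀ j ∈ Finset.range k,
            q * (q ^ (k - 1 - j) * (a2 / ((j : ℝ) + (t1 : ℝ)) ^ 2))
            = q ^ (k + 1 - 1 - j) * (a2 / ((j : ℝ) + (t1 : ℝ)) ^ 2) := by
          intro j hj
          rw [Finset.mem_range] at hj
          have : k + 1 - 1 - j = (k - 1 - j) + 1 := by omega
          rw [this, pow_succ]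
          ring
        rw [Finset.sum_congr rfl hterm]
        have : k + 1 - 1 - k = 0 := by omega
        rw [this, pow_zero, pow_succ]
        ring
      linarith [h1, h2, hsum.le, hsum.ge]
  intro k
  have hkpos : (0 : ℝ) < (k : ℝ) + (t1 : ℝ) := by
    have : (1 : ℝ) ≤ (t1 : ℝ) := by exact_mod_cast ht1
    linarith [Nat.cast_nonneg (α := ℝ) k]
  -- bound the sum
  have hbound : ∑ j ∈ Finset.range k, q ^ (k - 1 - j) * (a2 / ((j : ℝ) + (t1 : ℝ)) ^ 2)
      ≤ (4 * E * a2 * (1 - s)⁻¹) / ((k : ℝ) + (t1 : ℝ)) ^ 2 := by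
    have hterm : ∀ j ∈ Finset.range k,
        q ^ (k - 1 - j) * (a2 / ((j : ℝ) + (t1 : ℝ)) ^ 2)
        ≤ (4 * E * a2 / ((k : ℝ) + (t1 : ℝ)) ^ 2) * s ^ (k - 1 - j) := by
      intro j hj
      rw [Finset.mem_range] at hj
      obtain ⟨i, hidef⟩ : ∃ i : ℕ, i = k - 1 - j := ⟨_, rfl⟩
      have hicast : (i : ℝ) = (k : ℝ) - 1 - (j : ℝ) := by
        have : (i : ℕ) + j + 1 = k := by omega
        have := congrArg (fun n : ℕ => (n : ℝ)) this
        push_cast at this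
        linarith
      have hqi : q ^ i = s ^ i * s ^ i := by
        rw [← mul_pow, hss]
      have hsi0 : 0 ≤ s ^ i := pow_nonneg hs0 i
      have hbE : ((i : ℝ) + 1) ^ 2 * s ^ i ≤ E := hEb i
      have hjt : (1 : ℝ) ≤ (j : ℝ) + (t1 : ℝ) := by
        have : (1 : ℝ) ≤ (t1 : ℝ) := by exact_mod_cast ht1
        linarith [Nat.cast_nonneg (α := ℝ) j]
      have hi1 : (1 : ℝ) ≤ (i : ℝ) + 1 := by linarith [Nat.cast_nonneg (α := ℝ) i]
      have hkt : (k : ℝ) + (t1 : ℝ) ≤ 2 * (((i : ℝ) + 1) * ((j : ℝ) + (t1 : ℝ))) := by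
        nlinarith [mul_nonneg (sub_nonneg.mpr hi1) (sub_nonneg.mpr hjt), hicast]
      have hK : ((k : ℝ) + (t1 : ℝ)) ^ 2 ≤ 4 * ((i : ℝ) + 1) ^ 2 * ((j : ℝ) + (t1 : ℝ)) ^ 2 := by
        nlinarith [mul_self_le_mul_self hkpos.le hkt]
      have hB : (0 : ℝ) < ((j : ℝ) + (t1 : ℝ)) ^ 2 := by positivity
      have hK0 : (0 : ℝ) < ((k : ℝ) + (t1 : ℝ)) ^ 2 := by positivity
      rw [← hidef, hqi, ← mul_div_assoc, div_mul_eq_mul_div, div_le_div_iff₀ hB hK0]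
      have c1 := mul_le_mul_of_nonneg_right hK (mul_nonneg (mul_nonneg hsi0 hsi0) ha2.le)
      have c2 := mul_le_mul_of_nonneg_right hbE (mul_nonneg (mul_nonneg hsi0 ha2.le) hB.le)
      linarith [c1, c2]
    calc ∑ j ∈ Finset.range k, q ^ (k - 1 - j) * (a2 / ((j : ℝ) + (t1 : ℝ)) ^ 2)
        ≤ ∑ j ∈ Finset.range k, (4 * E * a2 / ((k : ℝ) + (t1 : ℝ)) ^ 2) * s ^ (k - 1 - j) :=
          Finset.sum_le_sum hterm
      _ = (4 * E * a2 / ((k : ℝ) + (t1 : ℝ)) ^ 2) * ∑ j ∈ Finset.range k, s ^ (k - 1 - j) := by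
          rw [Finset.mul_sum]
      _ ≤ (4 * E * a2 / ((k : ℝ) + (t1 : ℝ)) ^ 2) * (1 - s)⁻¹ := by
          apply mul_le_mul_of_nonneg_left _ (by positivity)
          have hre : ∑ j ∈ Finset.range k, s ^ (k - 1 - j) = ∑ i ∈ Finset.range k, s ^ i := by
            rw [← Finset.sum_range_reflect]
            apply Finset.sum_congr rfl
            intro j hj
            rw [Finset.mem_range] at hj
            congr 1
            omega
          rw [hre]
          have := Summable.sum_le_tsum (Finset.range k) (fun i _ => pow_nonneg hs0 i)
            (summable_geometric_of_lt_one hs0 hs1)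
          rwa [tsum_geometric_of_lt_one hs0 hs1] at this
      _ = (4 * E * a2 * (1 - s)⁻¹) / ((k : ℝ) + (t1 : ℝ)) ^ 2 := by ring
  calc z k ≤ q ^ k * z 0 +
      ∑ j ∈ Finset.range k, q ^ (k - 1 - j) * (a2 / ((j : ℝ) + (t1 : ℝ)) ^ 2) := key k
    _ ≤ (1 - a1) ^ k * z 0 + (4 * E * a2 * (1 - s)⁻¹) / ((k : ℝ) + (t1 : ℝ)) ^ 2 := by
        rw [← hqdef]
        linarith [hbound]
end

section
/- Let N ≥ 1, let K ∈ ℝ^{N×N} be a symmetric orthogonal projection matrix (K² = K = Kᵀ), and let P ∈ ℝ^{N×N} be a symmetric positive semidefinite matrix with P ≼ λ̲⁻¹·I_N for some λ̲ > 0. Let β₁ > 1/λ̲. Then for all x, y ∈ ℝ^N: (1/2)·xᵀKx + ((1 + β₁)/2)·yᵀPy + xᵀKPy ≥ (1/2 − 1/(2·β₁·λ̲))·(xᵀKx + yᵀPy). In particular the left-hand side is nonnegative. -/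
/-
Write `u = K x`. Since `K` is a symmetric projection, `xᵀKx = ‖u‖²` and `xᵀKPy = uᵀPy`, while
`P ≼ λ̲⁻¹ I` gives `uᵀPu ≤ λ̲⁻¹‖u‖²`. Positive semidefiniteness of `P` applied to `u + β₁ y`
bounds the cross term: `-2β₁ uᵀPy ≤ uᵀPu + β₁² yᵀPy`. Substituting, twice `β₁` times the gap
between the two sides is at least `λ̲⁻¹ (‖u‖² - λ̲ uᵀPu) + λ̲⁻¹ yᵀPy ≥ 0`.
-/

open Matrix

namespace Matrix

variable {n : Type*} [Fintype n]

theorem IsSymm.dotProduct_mulVec {R : Type*} [CommSemiring R] {A : Matrix n n R}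
    (hA : A.IsSymm) (v w : n → R) : v ⬝ᵥ A *ᵥ w = A *ᵥ v ⬝ᵥ w := by
  rw [Matrix.dotProduct_mulVec, ← mulVec_transpose, hA.eq]

theorem IsSymm.dotProduct_mulVec_self_of_mul_self {R : Type*} [CommSemiring R]
    {K : Matrix n n R} (hK : K.IsSymm) (hKK : K * K = K) (x : n → R) :
    x ⬝ᵥ K *ᵥ x = K *ᵥ x ⬝ᵥ K *ᵥ x := by
  conv_lhs => rw [← hKK, ← mulVec_mulVec]
  exact hK.dotProduct_mulVec x _

theorem PosSemidef.neg_two_mul_dotProduct_mulVec_le {P : Matrix n n ℝ} (hP : P.PosSemidef)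
    (u y : n → ℝ) (t : ℝ) :
    -(2 * t * (u ⬝ᵥ P *ᵥ y)) ≤ u ⬝ᵥ P *ᵥ u + t ^ 2 * (y ⬝ᵥ P *ᵥ y) := by
  have hsymm : y ⬝ᵥ P *ᵥ u = u ⬝ᵥ P *ᵥ y := by
    rw [(isHermitian_iff_isSymm.mp hP.isHermitian).dotProduct_mulVec, dotProduct_comm]
  have h := hP.dotProduct_mulVec_nonneg (u + t • y)
  simp only [star_trivial, mulVec_add, mulVec_smul, add_dotProduct, dotProduct_add,
    smul_dotProduct, dotProduct_smul, smul_eq_mul, hsymm] at h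
  nlinarith [h]

theorem dotProduct_mulVec_le_of_posSemidef_smul_one_sub [DecidableEq n] {P : Matrix n n ℝ}
    {c : ℝ} (h : (c • (1 : Matrix n n ℝ) - P).PosSemidef) (u : n → ℝ) :
    u ⬝ᵥ P *ᵥ u ≤ c * (u ⬝ᵥ u) := by
  have := h.dotProduct_mulVec_nonneg u
  simp only [star_trivial, sub_mulVec, smul_mulVec, one_mulVec, dotProduct_sub,
    dotProduct_smul, smul_eq_mul] at this
  linarith

end Matrix

theorem lyapunov_scalar_bound {a b c d lam β : ℝ} (hlam : 0 < lam) (hβ : 1 / lam < β)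
    (hb : b ≤ lam⁻¹ * a) (hd : 0 ≤ d) (hc : -(2 * β * c) ≤ b + β ^ 2 * d) :
    (1 / 2 - 1 / (2 * β * lam)) * (a + d) ≤ 1 / 2 * a + (1 + β) / 2 * d + c := by
  have hβ0 : 0 < β := lt_trans (by positivity) hβ
  have key : 1 / 2 * a + (1 + β) / 2 * d + c - (1 / 2 - 1 / (2 * β * lam)) * (a + d)
      = (lam⁻¹ * a - b + (b + β ^ 2 * d + 2 * β * c) + lam⁻¹ * d) / (2 * β) := by
    field_simp
    ring
  have hd' : 0 ≤ lam⁻¹ * d := by positivity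
  have hgap : 0 ≤ (lam⁻¹ * a - b + (b + β ^ 2 * d + 2 * β * c) + lam⁻¹ * d) / (2 * β) :=
    div_nonneg (by linarith) (by positivity)
  linarith

theorem lyapunov_quadratic_lower_bound_general (N : ℕ)
    (K P : Matrix (Fin N) (Fin N) ℝ)
    (hKsym : K.IsSymm) (hKproj : K * K = K)
    (hP : P.PosSemidef)
    (lam : ℝ) (hlam : 0 < lam)
    (hPle : (lam⁻¹ • (1 : Matrix (Fin N) (Fin N) ℝ) - P).PosSemidef)
    (β₁ : ℝ) (hβ₁ : 1 / lam < β₁) :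
    ∀ x y : Fin N → ℝ,
      (1 / 2 - 1 / (2 * β₁ * lam)) * (x ⬝ᵥ K.mulVec x + y ⬝ᵥ P.mulVec y)
        ≤ 1 / 2 * (x ⬝ᵥ K.mulVec x) + (1 + β₁) / 2 * (y ⬝ᵥ P.mulVec y)
          + x ⬝ᵥ K.mulVec (P.mulVec y) ∧
      0 ≤ 1 / 2 * (x ⬝ᵥ K.mulVec x) + (1 + β₁) / 2 * (y ⬝ᵥ P.mulVec y)
          + x ⬝ᵥ K.mulVec (P.mulVec y) := by
  intro x y
  have hPy : 0 ≤ y ⬝ᵥ P *ᵥ y := by simpa using hP.dotProduct_mulVec_nonneg y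
  rw [hKsym.dotProduct_mulVec_self_of_mul_self hKproj, hKsym.dotProduct_mulVec x (P *ᵥ y)]
  have bound := lyapunov_scalar_bound hlam hβ₁
    (dotProduct_mulVec_le_of_posSemidef_smul_one_sub hPle (K *ᵥ x)) hPy
    (hP.neg_two_mul_dotProduct_mulVec_le (K *ᵥ x) y β₁)
  refine ⟨bound, le_trans ?_ bound⟩
  have hcoef : 1 / (2 * β₁ * lam) ≤ 1 / 2 := by
    rw [div_lt_iff₀ hlam] at hβ₁
    gcongr
    linarith
  have hnorm : 0 ≤ K *ᵥ x ⬝ᵥ K *ᵥ x := dotProduct_self_star_nonneg _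
  exact mul_nonneg (by linarith) (by linarith)

/-- The Lyapunov quadratic form `(1/2)xᵀKx + ((1+β₁)/2)yᵀPy + xᵀKPy` dominates
`(1/2 − 1/(2β₁λ̲))(xᵀKx + yᵀPy)` whenever `K` is a symmetric projection, `P` is PSD with
`P ≼ λ̲⁻¹ I`, and `β₁ > 1/λ̲`; in particular it is nonnegative. -/
theorem lyapunov_quadratic_lower_bound (N : ℕ) (hN : 1 ≤ N)
    (K P : Matrix (Fin N) (Fin N) ℝ)
    (hKsym : K.IsSymm) (hKproj : K * K = K)
    (hP : P.PosSemidef)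
    (lam : ℝ) (hlam : 0 < lam)
    (hPle : (lam⁻¹ • (1 : Matrix (Fin N) (Fin N) ℝ) - P).PosSemidef)
    (β₁ : ℝ) (hβ₁ : 1 / lam < β₁) :
    ∀ x y : Fin N → ℝ,
      (1 / 2 - 1 / (2 * β₁ * lam)) * (x ⬝ᵥ K.mulVec x + y ⬝ᵥ P.mulVec y)
        ≤ 1 / 2 * (x ⬝ᵥ K.mulVec x) + (1 + β₁) / 2 * (y ⬝ᵥ P.mulVec y)
          + x ⬝ᵥ K.mulVec (P.mulVec y) ∧
      0 ≤ 1 / 2 * (x ⬝ᵥ K.mulVec x) + (1 + β₁) / 2 * (y ⬝ᵥ P.mulVec y)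
          + x ⬝ᵥ K.mulVec (P.mulVec y) :=
  lyapunov_quadratic_lower_bound_general N K P hKsym hKproj hP lam hlam hPle β₁ hβ₁
end

section
/- Let d ≥ 1, n ≥ 1, and let f₁, …, fₙ : ℝ^d → ℝ each be L_f-smooth for some L_f > 0. Set f = (1/n)·Σ_{i=1}^n fᵢ and suppose f is bounded below with infimum f* > −∞. Let x₁, …, xₙ ∈ ℝ^d, x̄ = (1/n)·Σ_{i=1}^n xᵢ, and ḡ = (1/n)·Σ_{i=1}^n ∇fᵢ(xᵢ). Let (Ω, 𝓕, ℙ) be a probability space, g : Ω → ℝ^d a square-integrable random vector with 𝔼[g] = ḡ, η > 0, and x̄⁺ = x̄ − η·g. Then 𝔼[f(x̄⁺)] − f* ≤ (f(x̄) − f*) − (η/4)·‖ḡ‖² − (η/4)·‖∇f(x̄)‖² + (η·L_f²/2)·(1/n)·Σ_{i=1}^n ‖xᵢ − x̄‖² + (η²·L_f/2)·𝔼[‖g‖²]. -/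
/-!
Apply the descent lemma to the `L_f`-smooth average `F` along the random step `-η g` and take
expectations: since `𝔼 g = ḡ`, this gives `𝔼 F(x̄⁺) ≤ F(x̄) - η ⟪∇F(x̄), ḡ⟫ + (η² L_f / 2) 𝔼 ‖g‖²`.
Polarization turns `-⟪∇F(x̄), ḡ⟫` into `(‖∇F(x̄) - ḡ‖² - ‖∇F(x̄)‖² - ‖ḡ‖²) / 2`, and by Jensen's
inequality and the smoothness of each `fᵢ` the consensus error `‖∇F(x̄) - ḡ‖²` is at most `L_f²`
times the mean squared spread `(1/n) Σ ‖xᵢ - x̄‖²`.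
-/

open MeasureTheory

section LipschitzGradient

variable {E : Type*} [NormedAddCommGroup E] [InnerProductSpace ℝ E] [CompleteSpace E]
  {h : E → ℝ} {L : ℝ}

theorem hasDerivAt_comp_add_smul (hh : Differentiable ℝ h) (x v : E) (t : ℝ) :
    HasDerivAt (fun s : ℝ => h (x + s • v)) (inner ℝ (gradient h (x + t • v)) v) t := by
  have hline : HasDerivAt (fun s : ℝ => x + s • v) v t := by
    simpa using ((hasDerivAt_id t).smul_const v).const_add x
  exact (hh _).hasGradientAt.hasFDerivAt.comp_hasDerivAt t hline

theorem inner_gradient_add_smul_sub_le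
    (hlip : ∀ a b, ‖gradient h a - gradient h b‖ ≤ L * ‖a - b‖)
    (x v : E) {t : ℝ} (ht : 0 ≤ t) :
    inner ℝ (gradient h (x + t • v)) v - inner ℝ (gradient h x) v ≤ L * t * ‖v‖ ^ 2 := by
  rw [← inner_sub_left]
  calc inner ℝ (gradient h (x + t • v) - gradient h x) v
      ≤ ‖gradient h (x + t • v) - gradient h x‖ * ‖v‖ := real_inner_le_norm _ _
    _ ≤ L * ‖x + t • v - x‖ * ‖v‖ := by gcongr; exact hlip _ _
    _ = L * t * ‖v‖ ^ 2 := by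
      rw [add_sub_cancel_left, norm_smul, Real.norm_of_nonneg ht]; ring

theorem le_add_inner_gradient_add_sq (hh : Differentiable ℝ h)
    (hlip : ∀ a b, ‖gradient h a - gradient h b‖ ≤ L * ‖a - b‖) (x y : E) :
    h y ≤ h x + inner ℝ (gradient h x) (y - x) + L / 2 * ‖y - x‖ ^ 2 := by
  set v := y - x
  set φ : ℝ → ℝ := fun t => h (x + t • v) - t * inner ℝ (gradient h x) v - L / 2 * t ^ 2 * ‖v‖ ^ 2
  have hφ : ∀ t, HasDerivAt φ
      (inner ℝ (gradient h (x + t • v)) v - inner ℝ (gradient h x) v - L * t * ‖v‖ ^ 2) t := by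
    intro t
    have hsq := ((hasDerivAt_pow 2 t).const_mul (L / 2)).mul_const (‖v‖ ^ 2)
    refine (((hasDerivAt_comp_add_smul hh x v t).sub
      ((hasDerivAt_id t).mul_const (inner ℝ (gradient h x) v))).sub hsq).congr_deriv ?_
    simp only [Nat.cast_ofNat]
    ring
  have hanti : AntitoneOn φ (Set.Icc 0 1) := by
    refine antitoneOn_of_deriv_nonpos (convex_Icc 0 1)
      (fun t _ => (hφ t).continuousAt.continuousWithinAt)
      (fun t _ => (hφ t).differentiableAt.differentiableWithinAt) fun t ht => ?_
    rw [(hφ t).deriv, sub_nonpos]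
    exact inner_gradient_add_smul_sub_le hlip x v (interior_subset ht).1
  have h10 := hanti (Set.left_mem_Icc.2 zero_le_one) (Set.right_mem_Icc.2 zero_le_one) zero_le_one
  simp only [φ, v, one_smul, zero_smul, add_zero, add_sub_cancel] at h10
  linarith

theorem apply_sub_smul_le (hh : Differentiable ℝ h)
    (hlip : ∀ a b, ‖gradient h a - gradient h b‖ ≤ L * ‖a - b‖) (x u : E) (η : ℝ) :
    h (x - η • u) ≤ h x - η * inner ℝ (gradient h x) u + L / 2 * η ^ 2 * ‖u‖ ^ 2 := by
  have := le_add_inner_gradient_add_sq hh hlip x (x - η • u)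
  rwa [sub_sub_cancel_left, inner_neg_right, real_inner_smul_right, norm_neg, norm_smul,
    Real.norm_eq_abs, mul_pow, sq_abs, ← sub_eq_add_neg, ← mul_assoc] at this

variable {Ω : Type*} [MeasurableSpace Ω] {μ : Measure Ω} [IsProbabilityMeasure μ]
  {g : Ω → E}

theorem integral_apply_sub_smul_le (hh : Differentiable ℝ h)
    (hlip : ∀ a b, ‖gradient h a - gradient h b‖ ≤ L * ‖a - b‖) (hbdd : BddBelow (Set.range h))
    (hg : MemLp g 2 μ) (x : E) (η : ℝ) :
    ∫ ω, h (x - η • g ω) ∂μ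
      ≤ h x - η * inner ℝ (gradient h x) (∫ ω, g ω ∂μ) + L / 2 * η ^ 2 * ∫ ω, ‖g ω‖ ^ 2 ∂μ := by
  obtain ⟨C, hC⟩ := hbdd
  have hg1 : Integrable g μ := hg.integrable one_le_two
  have hinner : Integrable (fun ω => inner ℝ (gradient h x) (g ω)) μ :=
    (innerSL ℝ (gradient h x)).integrable_comp hg1
  have hsq : Integrable (fun ω => ‖g ω‖ ^ 2) μ := hg.integrable_norm_pow two_ne_zero
  have hlin : Integrable (fun ω => h x - η * inner ℝ (gradient h x) (g ω)) μ :=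
    (integrable_const _).sub (hinner.const_mul η)
  have hbound : Integrable (fun ω =>
      h x - η * inner ℝ (gradient h x) (g ω) + L / 2 * η ^ 2 * ‖g ω‖ ^ 2) μ :=
    hlin.add (hsq.const_mul _)
  have hstep : ∀ ω, h (x - η • g ω)
      ≤ h x - η * inner ℝ (gradient h x) (g ω) + L / 2 * η ^ 2 * ‖g ω‖ ^ 2 :=
    fun ω => apply_sub_smul_le hh hlip x (g ω) η
  have hint : Integrable (fun ω => h (x - η • g ω)) μ :=
    integrable_of_le_of_le
      (hh.continuous.comp_aestronglyMeasurable
        (aestronglyMeasurable_const.sub (hg.1.const_smul η)))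
      (ae_of_all _ fun ω => hC ⟨_, rfl⟩) (ae_of_all _ hstep) (integrable_const C) hbound
  calc ∫ ω, h (x - η • g ω) ∂μ
      ≤ ∫ ω, (h x - η * inner ℝ (gradient h x) (g ω) + L / 2 * η ^ 2 * ‖g ω‖ ^ 2) ∂μ :=
        integral_mono hint hbound hstep
    _ = _ := by
      rw [integral_add hlin (hsq.const_mul _),
        integral_sub (integrable_const _) (hinner.const_mul η), integral_const,
        integral_const_mul, integral_const_mul, integral_inner hg1]
      simp

end LipschitzGradient

section Average

variable {E : Type*} [SeminormedAddCommGroup E] [NormedSpace ℝ E] {ι : Type*} [Fintype ι]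

theorem norm_average_le (v : ι → E) :
    ‖(Fintype.card ι : ℝ)⁻¹ • ∑ i, v i‖ ≤ (Fintype.card ι : ℝ)⁻¹ * ∑ i, ‖v i‖ := by
  rw [norm_smul, norm_inv, Real.norm_natCast]
  gcongr
  exact norm_sum_le _ _

theorem norm_average_sq_le (v : ι → E) :
    ‖(Fintype.card ι : ℝ)⁻¹ • ∑ i, v i‖ ^ 2 ≤ (Fintype.card ι : ℝ)⁻¹ * ∑ i, ‖v i‖ ^ 2 := by
  calc ‖(Fintype.card ι : ℝ)⁻¹ • ∑ i, v i‖ ^ 2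
      ≤ ((Fintype.card ι : ℝ)⁻¹ * ∑ i, ‖v i‖) ^ 2 := by gcongr; exact norm_average_le v
    _ ≤ (Fintype.card ι : ℝ)⁻¹ * ∑ i, ‖v i‖ ^ 2 := by
      simpa [inv_mul_eq_div] using
        sum_div_card_sq_le_sum_sq_div_card (s := Finset.univ) (f := fun i => ‖v i‖)

end Average

section AverageGradient

variable {E : Type*} [NormedAddCommGroup E] [InnerProductSpace ℝ E] [CompleteSpace E]
  {ι : Type*} [Fintype ι] {f : ι → E → ℝ} {L : ℝ}

theorem gradient_const_mul_sum (hf : ∀ i, Differentiable ℝ (f i)) (c : ℝ) (z : E) :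
    gradient (fun y => c * ∑ i, f i y) z = c • ∑ i, gradient (f i) z := by
  have hsum : HasFDerivAt (fun y => ∑ i, f i y) (∑ i, fderiv ℝ (f i) z) z :=
    HasFDerivAt.fun_sum fun i _ => (hf i z).hasFDerivAt
  rw [(hsum.const_mul c).hasGradientAt.gradient, map_smul, map_sum]
  rfl

theorem norm_gradient_average_sub_le (hf : ∀ i, Differentiable ℝ (f i)) (hL : 0 ≤ L)
    (hlip : ∀ i a b, ‖gradient (f i) a - gradient (f i) b‖ ≤ L * ‖a - b‖) (a b : E) :
    ‖gradient (fun y => (Fintype.card ι : ℝ)⁻¹ * ∑ i, f i y) a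
      - gradient (fun y => (Fintype.card ι : ℝ)⁻¹ * ∑ i, f i y) b‖ ≤ L * ‖a - b‖ := by
  rw [gradient_const_mul_sum hf, gradient_const_mul_sum hf, ← smul_sub, ← Finset.sum_sub_distrib]
  calc _ ≤ (Fintype.card ι : ℝ)⁻¹ * ∑ i, ‖gradient (f i) a - gradient (f i) b‖ :=
        norm_average_le _
    _ ≤ (Fintype.card ι : ℝ)⁻¹ * ∑ _i : ι, L * ‖a - b‖ := by gcongr with i; exact hlip i a b
    _ = ((Fintype.card ι : ℝ)⁻¹ * Fintype.card ι) * (L * ‖a - b‖) := by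
      rw [Finset.sum_const, Finset.card_univ, nsmul_eq_mul, mul_assoc]
    _ ≤ L * ‖a - b‖ := by
      apply mul_le_of_le_one_left (by positivity)
      exact inv_mul_le_one_of_le₀ le_rfl (Nat.cast_nonneg _)

theorem norm_average_gradient_sub_sq_le
    (hlip : ∀ i a b, ‖gradient (f i) a - gradient (f i) b‖ ≤ L * ‖a - b‖) (x : ι → E) (z : E) :
    ‖(Fintype.card ι : ℝ)⁻¹ • ∑ i, gradient (f i) z
      - (Fintype.card ι : ℝ)⁻¹ • ∑ i, gradient (f i) (x i)‖ ^ 2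
      ≤ L ^ 2 * ((Fintype.card ι : ℝ)⁻¹ * ∑ i, ‖x i - z‖ ^ 2) := by
  rw [← smul_sub, ← Finset.sum_sub_distrib]
  calc _ ≤ (Fintype.card ι : ℝ)⁻¹ * ∑ i, ‖gradient (f i) z - gradient (f i) (x i)‖ ^ 2 :=
        norm_average_sq_le _
    _ ≤ (Fintype.card ι : ℝ)⁻¹ * ∑ i, (L * ‖x i - z‖) ^ 2 := by
      gcongr with i
      rw [norm_sub_rev (x i)]
      exact hlip i z (x i)
    _ = L ^ 2 * ((Fintype.card ι : ℝ)⁻¹ * ∑ i, ‖x i - z‖ ^ 2) := by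
      simp only [mul_pow, ← Finset.mul_sum]; ring

end AverageGradient

theorem one_step_descent_estimate_general {Ω : Type*} [MeasurableSpace Ω]
    (μ : Measure Ω) [IsProbabilityMeasure μ]
    (d n : ℕ)
    (f : Fin n → EuclideanSpace ℝ (Fin d) → ℝ) (Lf : ℝ) (hLf : 0 < Lf)
    (hdiff : ∀ i, Differentiable ℝ (f i))
    (hlip : ∀ i x y, ‖gradient (f i) x - gradient (f i) y‖ ≤ Lf * ‖x - y‖)
    (F : EuclideanSpace ℝ (Fin d) → ℝ)
    (hF : F = fun y => (n : ℝ)⁻¹ * ∑ i, f i y)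
    (hbdd : BddBelow (Set.range F))
    (x : Fin n → EuclideanSpace ℝ (Fin d))
    (xbar : EuclideanSpace ℝ (Fin d))
    (gbar : EuclideanSpace ℝ (Fin d))
    (hgbar : gbar = (n : ℝ)⁻¹ • ∑ i, gradient (f i) (x i))
    (g : Ω → EuclideanSpace ℝ (Fin d)) (hmem : MemLp g 2 μ)
    (hmean : ∫ ω, g ω ∂μ = gbar)
    (η : ℝ) (hη : 0 < η) :
    (∫ ω, F (xbar - η • g ω) ∂μ) - (⨅ y, F y)
      ≤ (F xbar - ⨅ y, F y) - η / 4 * ‖gbar‖ ^ 2 - η / 4 * ‖gradient F xbar‖ ^ 2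
        + η * Lf ^ 2 / 2 * ((n : ℝ)⁻¹ * ∑ i, ‖x i - xbar‖ ^ 2)
        + η ^ 2 * Lf / 2 * ∫ ω, ‖g ω‖ ^ 2 ∂μ := by
  have hFdiff : Differentiable ℝ F :=
    hF ▸ (Differentiable.fun_sum fun i _ => hdiff i).const_mul _
  have hFlip : ∀ a b, ‖gradient F a - gradient F b‖ ≤ Lf * ‖a - b‖ := by
    simpa [hF] using norm_gradient_average_sub_le hdiff hLf.le hlip
  have hdescent := integral_apply_sub_smul_le hFdiff hFlip hbdd hmem xbar η
  have hconsensus : ‖gradient F xbar - gbar‖ ^ 2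
      ≤ Lf ^ 2 * ((n : ℝ)⁻¹ * ∑ i, ‖x i - xbar‖ ^ 2) := by
    rw [hF, gradient_const_mul_sum hdiff, hgbar]
    simpa using norm_average_gradient_sub_sq_le hlip x xbar
  have hpolar := norm_sub_sq_real (gradient F xbar) gbar
  rw [hmean] at hdescent
  linarith [mul_le_mul_of_nonneg_left hconsensus hη.le, congrArg (η * ·) hpolar,
    mul_nonneg hη.le (sq_nonneg ‖gbar‖), mul_nonneg hη.le (sq_nonneg ‖gradient F xbar‖)]

/-- One-step descent estimate for the averaged iterate: if each `fᵢ` is `L_f`-smooth,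
`f = (1/n)Σ fᵢ` is bounded below with infimum `f*`, `g` is a random vector with mean
`ḡ = (1/n)Σ ∇fᵢ(xᵢ)`, and `x̄⁺ = x̄ − η g`, then
`𝔼 f(x̄⁺) − f* ≤ (f(x̄) − f*) − (η/4)‖ḡ‖² − (η/4)‖∇f(x̄)‖²
  + (ηL_f²/2)(1/n)Σ‖xᵢ − x̄‖² + (η²L_f/2)𝔼‖g‖²`. -/
theorem one_step_descent_estimate {Ω : Type*} [MeasurableSpace Ω]
    (μ : Measure Ω) [IsProbabilityMeasure μ]
    (d n : ℕ) (hd : 1 ≤ d) (hn : 1 ≤ n)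
    (f : Fin n → EuclideanSpace ℝ (Fin d) → ℝ) (Lf : ℝ) (hLf : 0 < Lf)
    (hdiff : ∀ i, Differentiable ℝ (f i))
    (hlip : ∀ i x y, ‖gradient (f i) x - gradient (f i) y‖ ≤ Lf * ‖x - y‖)
    (F : EuclideanSpace ℝ (Fin d) → ℝ)
    (hF : F = fun y => (n : ℝ)⁻¹ * ∑ i, f i y)
    (hbdd : BddBelow (Set.range F))
    (x : Fin n → EuclideanSpace ℝ (Fin d))
    (xbar : EuclideanSpace ℝ (Fin d)) (hxbar : xbar = (n : ℝ)⁻¹ • ∑ i, x i)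
    (gbar : EuclideanSpace ℝ (Fin d))
    (hgbar : gbar = (n : ℝ)⁻¹ • ∑ i, gradient (f i) (x i))
    (g : Ω → EuclideanSpace ℝ (Fin d)) (hmem : MemLp g 2 μ)
    (hmean : ∫ ω, g ω ∂μ = gbar)
    (η : ℝ) (hη : 0 < η) :
    (∫ ω, F (xbar - η • g ω) ∂μ) - (⨅ y, F y)
      ≤ (F xbar - ⨅ y, F y) - η / 4 * ‖gbar‖ ^ 2 - η / 4 * ‖gradient F xbar‖ ^ 2
        + η * Lf ^ 2 / 2 * ((n : ℝ)⁻¹ * ∑ i, ‖x i - xbar‖ ^ 2)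
        + η ^ 2 * Lf / 2 * ∫ ω, ‖g ω‖ ^ 2 ∂μ :=
  one_step_descent_estimate_general μ d n f Lf hLf hdiff hlip F hF hbdd x xbar gbar hgbar g hmem
    hmean η hη
end
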